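/- arXiv:0903.2518 — 5 statements merged into one kernel-verified Lean document; each statement's English description precedes it below -/
import Mathlib

section
/- The set of typical real numbers is of first Baire category (meager) in ℝ. -/
open Real Set Filter MeasureTheory

/-- `α` is typical with exponent `τ` and constant `δ`. -/
def IsTypicalWith (α τ δ : ℝ) : Prop :=
  ∀ k₁ k₂ : ℤ, k₂ ≠ 0 →
    δ / (|(k₂ : ℝ)| * (Real.log (1 + |(k₂ : ℝ)|)) ^ τ) ≤ |(k₁ : ℝ) + α * (k₂ : ℝ)|

/-- `α` is typical: typical with some exponent `τ > 0` and constant `δ > 0`. -/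
def IsTypical (α : ℝ) : Prop := ∃ τ > (0:ℝ), ∃ δ > (0:ℝ), IsTypicalWith α τ δ

lemma not_isTypical_of_liouville {x : ℝ} (hx : Liouville x) : ¬ IsTypical x := by
  rintro ⟨τ, hτ, δ, hδ, h⟩
  obtain ⟨m, hm⟩ := exists_nat_ge τ
  obtain ⟨N, hN⟩ := pow_unbounded_of_one_lt (1/δ) (by norm_num : (1:ℝ) < 2)
  obtain ⟨a, b, hb, hxab, hlt⟩ := hx (m + 2 + N)
  have hb2 : (2:ℝ) ≤ (b:ℝ) := by exact_mod_cast hb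
  have hbpos : (0:ℝ) < (b:ℝ) := by linarith
  have habs : |(b:ℝ)| = (b:ℝ) := abs_of_pos hbpos
  have hk := h (-a) b (by positivity)
  rw [habs] at hk
  push_cast at hk
  -- log bound : log (1 + b) ≤ b
  have hlog_nonneg : 0 ≤ Real.log (1 + (b:ℝ)) := Real.log_nonneg (by linarith)
  have hlog_le : Real.log (1 + (b:ℝ)) ≤ (b:ℝ) := by
    have := Real.log_le_sub_one_of_pos (x := 1 + (b:ℝ)) (by linarith)
    linarith
  have hpow1 : (Real.log (1 + (b:ℝ))) ^ τ ≤ (b:ℝ) ^ τ :=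
    Real.rpow_le_rpow hlog_nonneg hlog_le hτ.le
  have hpow2 : ((b:ℝ)) ^ τ ≤ (b:ℝ) ^ (m:ℝ) :=
    Real.rpow_le_rpow_of_exponent_le (by linarith) hm
  have hpow3 : ((b:ℝ)) ^ (m:ℝ) = (b:ℝ) ^ m := Real.rpow_natCast _ m
  have hlogle : (Real.log (1 + (b:ℝ))) ^ τ ≤ (b:ℝ) ^ m := by
    rw [← hpow3]; exact hpow1.trans hpow2
  have hlogpos : 0 < (Real.log (1 + (b:ℝ))) ^ τ :=
    Real.rpow_pos_of_pos (Real.log_pos (by linarith)) τ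
  -- lower bound on the typical quantity
  have hlb : δ / ((b:ℝ) ^ (m+1)) ≤ δ / ((b:ℝ) * (Real.log (1 + (b:ℝ))) ^ τ) := by
    apply div_le_div_of_nonneg_left hδ.le (by positivity)
    calc (b:ℝ) * (Real.log (1 + (b:ℝ))) ^ τ ≤ (b:ℝ) * (b:ℝ) ^ m := by
          exact mul_le_mul_of_nonneg_left hlogle hbpos.le
      _ = (b:ℝ) ^ (m+1) := by ring
  -- upper bound from Liouville approximation
  have hub : |(-a:ℝ) + x * b| < 1 / (b:ℝ) ^ (m + 1 + N) := by
    have : |x - a / b| * (b:ℝ) < (1 / (b:ℝ) ^ (m + 2 + N)) * (b:ℝ) :=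
      mul_lt_mul_of_pos_right hlt hbpos
    have hcalc : (x - a / b) * (b:ℝ) = (-a:ℝ) + x * b := by
      field_simp
      ring
    have heq : |x - a / b| * (b:ℝ) = |(-a:ℝ) + x * b| := by
      nth_rewrite 2 [← habs]
      rw [← abs_mul, hcalc]
    rw [heq] at this
    calc |(-a:ℝ) + x * b| < (1 / (b:ℝ) ^ (m + 2 + N)) * (b:ℝ) := this
      _ = 1 / (b:ℝ) ^ (m + 1 + N) := by
          have hpe : (b:ℝ) ^ (m + 2 + N) = (b:ℝ) ^ (m + 1 + N) * b := by ring
          rw [hpe]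
          rw [div_mul_eq_mul_div, one_mul, mul_comm ((b:ℝ) ^ (m+1+N)) ((b:ℝ))]
          rw [← div_div, div_self hbpos.ne']
  have hchain : δ / ((b:ℝ) ^ (m+1)) < 1 / (b:ℝ) ^ (m + 1 + N) :=
    lt_of_le_of_lt (hlb.trans hk) hub
  rw [div_lt_div_iff₀ (by positivity) (by positivity)] at hchain
  have hexp : (b:ℝ) ^ (m + 1 + N) = (b:ℝ) ^ (m+1) * (b:ℝ) ^ N := by ring
  rw [hexp] at hchain
  have hδN : δ * (b:ℝ) ^ N < 1 := by
    have hbm : (0:ℝ) < (b:ℝ) ^ (m+1) := by positivity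
    nlinarith [hbm]
  have h2N : (2:ℝ) ^ N ≤ (b:ℝ) ^ N := pow_le_pow_left₀ (by norm_num) hb2 N
  have : (1:ℝ) < δ * (2:ℝ) ^ N := by
    rw [div_lt_iff₀ hδ] at hN
    linarith [hN]
  nlinarith [this, h2N, hδ]

/-- **The set of typical real numbers is of first Baire category (meager) in `ℝ`.** -/
theorem typical_numbers_meagre : IsMeagre {α : ℝ | IsTypical α} := by
  have h := eventually_residual_liouville
  exact Filter.mem_of_superset h fun x hx => not_isTypical_of_liouville hx
end

section
/- Let (U₁,U₂) ∈ Ω. Then: F₁ is continuous and strictly decreasing on [c₄,c₁] with F₁(c₁) = 0 and lim_{c→c₁⁻} F₁(c)/(c₁ − c) = π(−2U₁''(M₁))^{−1/2}; and F₂ is continuous and strictly increasing on [c₄,c₁] with F₂(c₄) = 0 and lim_{c→c₄⁺} F₂(c)/(c − c₄) = π(2U₂''(m₂))^{−1/2}. -/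
open Real Set Filter MeasureTheory
open Topology intervalIntegral

/-- `U` has exactly one local minimum and one local maximum in `[0,1)`, both nondegenerate. -/
def OneMinMax (U : ℝ → ℝ) : Prop :=
  (∃! q, q ∈ Set.Ico (0:ℝ) 1 ∧ IsLocalMin U q) ∧
  (∃! q, q ∈ Set.Ico (0:ℝ) 1 ∧ IsLocalMax U q) ∧
  ∀ q ∈ Set.Ico (0:ℝ) 1, (IsLocalMin U q ∨ IsLocalMax U q) → deriv (deriv U) q ≠ 0

/-- Membership in the class `Ω` of pairs of potentials defining a Liouville metric. -/
def InOmega (U₁ U₂ : ℝ → ℝ) : Prop :=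
  ContDiff ℝ (⊤ : ℕ∞) U₁ ∧ ContDiff ℝ (⊤ : ℕ∞) U₂ ∧
  (∀ q, U₁ (q + 1) = U₁ q) ∧ (∀ q, U₂ (q + 1) = U₂ q) ∧
  OneMinMax U₁ ∧ OneMinMax U₂ ∧
  ∀ q₁ q₂ : ℝ, U₂ q₂ < U₁ q₁ ∧ 0 < U₂ q₂

/-- `F₁(c) = ∫_{q ∈ [0,1], U₁(q) ≥ c} (U₁(q) - c)^{1/2} dq`
(the square root vanishes where `U₁(q) < c`). -/
noncomputable def F₁ (U₁ : ℝ → ℝ) (c : ℝ) : ℝ := ∫ q in (0:ℝ)..1, Real.sqrt (U₁ q - c)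

/-- `F₂(c) = ∫_{q ∈ [0,1], U₂(q) ≤ c} (c - U₂(q))^{1/2} dq`. -/
noncomputable def F₂ (U₂ : ℝ → ℝ) (c : ℝ) : ℝ := ∫ q in (0:ℝ)..1, Real.sqrt (c - U₂ q)

/-- Maximum value of `U` over a period. -/
noncomputable def cmax (U : ℝ → ℝ) : ℝ := sSup (U '' Set.Icc 0 1)

/-- Minimum value of `U` over a period. -/
noncomputable def cmin (U : ℝ → ℝ) : ℝ := sInf (U '' Set.Icc 0 1)

/-- Curvature of the plane curve `c ↦ (F₁(c), F₂(c))`. -/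
noncomputable def curv (F G : ℝ → ℝ) (c : ℝ) : ℝ :=
  (deriv (deriv G) c * deriv F c - deriv (deriv F) c * deriv G c) /
    ((deriv F c ^ 2 + deriv G c ^ 2) ^ ((3:ℝ)/2))

/-- The set of zeros of the curvature on `[c₄,c₃) ∪ (c₂,c₁]`. -/
noncomputable def curvZeros (U₁ U₂ : ℝ → ℝ) : Set ℝ :=
  {c | c ∈ Set.Ico (cmin U₂) (cmax U₂) ∪ Set.Ioc (cmin U₁) (cmax U₁) ∧
    curv (F₁ U₁) (F₂ U₂) c = 0}

/-- A Liouville metric given by `(U₁,U₂) ∈ Ω` is nondegenerate. -/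
def NondegLiouville (U₁ U₂ : ℝ → ℝ) : Prop :=
  InOmega U₁ U₂ ∧
  -- (1) finitely many zeros of the curvature, each of first order
  (curvZeros U₁ U₂).Finite ∧
  (∀ c ∈ curvZeros U₁ U₂, deriv (curv (F₁ U₁) (F₂ U₂)) c ≠ 0) ∧
  -- (2) typicality at the zeros of the curvature
  (∀ c ∈ curvZeros U₁ U₂, IsTypical (deriv (F₂ U₂) c / deriv (F₁ U₁) c)) ∧
  -- (3) typicality at `c₁` and `c₄`
  IsTypical (deriv (F₂ U₂) (cmax U₁) / deriv (F₁ U₁) (cmax U₁)) ∧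
  IsTypical (deriv (F₂ U₂) (cmin U₂) / deriv (F₁ U₁) (cmin U₂)) ∧
  -- (4) typicality at `c₂` and `c₃`
  IsTypical (F₂ U₂ (cmin U₁) / F₁ U₁ (cmin U₁)) ∧
  IsTypical (F₂ U₂ (cmax U₂) / F₁ U₁ (cmax U₂))



lemma sqrt_abs_sub_le (x y : ℝ) : |Real.sqrt x - Real.sqrt y| ≤ Real.sqrt |x - y| := by
  wlog h : Real.sqrt y ≤ Real.sqrt x generalizing x y
  · rw [abs_sub_comm, abs_sub_comm x y]; exact this y x (le_of_not_ge h)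
  rw [abs_of_nonneg (by linarith)]
  rcases le_or_gt x 0 with hx | hx
  · have : Real.sqrt x = 0 := Real.sqrt_eq_zero'.mpr hx
    rw [this]
    have := Real.sqrt_nonneg y
    have := Real.sqrt_nonneg |x - y|
    linarith
  rcases le_or_gt 0 y with hy | hy
  · have h1 : x ≤ (Real.sqrt y + Real.sqrt |x - y|) ^ 2 := by
      have hy' : Real.sqrt y ^ 2 = y := Real.sq_sqrt hy
      have ha : Real.sqrt |x - y| ^ 2 = |x - y| := Real.sq_sqrt (abs_nonneg _)
      have : x - y ≤ |x - y| := le_abs_self _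
      nlinarith [Real.sqrt_nonneg y, Real.sqrt_nonneg |x - y|]
    have := Real.sqrt_le_sqrt h1
    rw [Real.sqrt_sq (by positivity)] at this
    linarith
  · have hys : Real.sqrt y = 0 := Real.sqrt_eq_zero'.mpr hy.le
    rw [hys]
    have h1 : x ≤ |x - y| := by rw [abs_of_pos (by linarith)]; linarith
    simpa using Real.sqrt_le_sqrt h1


lemma cont_sqrt_parab (s b : ℝ) : Continuous fun x : ℝ => Real.sqrt (s - b * x ^ 2) :=
  Real.continuous_sqrt.comp (by continuity)

lemma integral_sqrt_parabola {b s δ : ℝ} (hb : 0 < b) (hs : 0 < s)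
    (hδ : Real.sqrt (s / b) ≤ δ) :
    ∫ x in (-δ)..δ, Real.sqrt (s - b * x ^ 2) = π * s / (2 * Real.sqrt b) := by
  set r := Real.sqrt (s / b) with hr
  have hr0 : 0 < r := Real.sqrt_pos.mpr (by positivity)
  have hr2 : r ^ 2 = s / b := Real.sq_sqrt (by positivity)
  have hint : ∀ u v : ℝ, IntervalIntegrable (fun x => Real.sqrt (s - b * x ^ 2)) volume u v :=
    fun u v => (cont_sqrt_parab s b).intervalIntegrable u v
  -- outer pieces vanish
  have hzero : ∀ x : ℝ, r ≤ |x| → Real.sqrt (s - b * x ^ 2) = 0 := by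
    intro x hx
    apply Real.sqrt_eq_zero'.mpr
    have : r ^ 2 ≤ x ^ 2 := by
      rw [← sq_abs x]; exact pow_le_pow_left₀ hr0.le hx 2
    rw [hr2] at this
    have : s ≤ b * x ^ 2 := by
      rw [div_le_iff₀ hb] at this; linarith [this]
    linarith
  have h1 : ∫ x in (-δ)..(-r), Real.sqrt (s - b * x ^ 2) = 0 := by
    rw [← intervalIntegral.integral_zero (a := -δ) (b := -r) (E := ℝ)]
    apply intervalIntegral.integral_congr
    intro x hx
    rw [uIcc_of_le (by linarith)] at hx
    exact hzero x (by rw [abs_of_nonpos (by linarith [hx.2])]; linarith [hx.2])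
  have h2 : ∫ x in r..δ, Real.sqrt (s - b * x ^ 2) = 0 := by
    rw [← intervalIntegral.integral_zero (a := r) (b := δ) (E := ℝ)]
    apply intervalIntegral.integral_congr
    intro x hx
    rw [uIcc_of_le (by linarith)] at hx
    exact hzero x (by rw [abs_of_nonneg (by linarith [hx.1])]; exact hx.1)
  have hsplit : ∫ x in (-δ)..δ, Real.sqrt (s - b * x ^ 2)
      = ∫ x in (-r)..r, Real.sqrt (s - b * x ^ 2) := by
    rw [← intervalIntegral.integral_add_adjacent_intervals (a := -δ) (b := -r) (c := δ)
      (hint _ _) (hint _ _), ← intervalIntegral.integral_add_adjacent_intervals (a := -r)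
      (b := r) (c := δ) (hint _ _) (hint _ _), h1, h2]
    ring
  rw [hsplit]
  -- substitution
  set k := Real.sqrt (b / s) with hk
  have hk0 : 0 < k := Real.sqrt_pos.mpr (by positivity)
  have hk2 : k ^ 2 = b / s := Real.sq_sqrt (by positivity)
  have hkr : k * r = 1 := by
    rw [hk, hr, ← Real.sqrt_mul (by positivity)]
    rw [div_mul_div_comm, mul_comm]
    rw [div_self (by positivity), Real.sqrt_one]
  have heq : ∀ x : ℝ, Real.sqrt (s - b * x ^ 2)
      = Real.sqrt s * Real.sqrt (1 - (k * x) ^ 2) := by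
    intro x
    rw [← Real.sqrt_mul hs.le]
    congr 1
    have : (k * x) ^ 2 = b / s * x ^ 2 := by rw [mul_pow, hk2]
    rw [this]
    field_simp
  simp_rw [heq]
  rw [intervalIntegral.integral_const_mul]
  have hcomp : ∫ x in (-r)..r, Real.sqrt (1 - (k * x) ^ 2)
      = k⁻¹ * ∫ y in (k * (-r))..(k * r), Real.sqrt (1 - y ^ 2) := by
    rw [intervalIntegral.integral_comp_mul_left (fun y => Real.sqrt (1 - y ^ 2)) hk0.ne']
    simp [smul_eq_mul]
  rw [hcomp, hkr]
  have : k * -r = -1 := by rw [mul_neg, hkr]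
  rw [this, integral_sqrt_one_sub_sq]
  have hks : k⁻¹ = r := by
    field_simp [hk0.ne']
    exact hkr.symm
  rw [hks]
  have : Real.sqrt s * (r * (π / 2)) = Real.sqrt s * r * π / 2 := by ring
  rw [this]
  have h3 : Real.sqrt s * r = s / Real.sqrt b := by
    rw [hr, ← Real.sqrt_mul hs.le,
      show s * (s / b) = s ^ 2 / b by ring, Real.sqrt_div (by positivity) b,
      Real.sqrt_sq hs.le]
  rw [h3]; ring


lemma diff_of_contDiff2 {W : ℝ → ℝ} (hC : ContDiff ℝ 2 W) :
    Differentiable ℝ W ∧ Differentiable ℝ (deriv W) ∧ Continuous (deriv (deriv W)) := by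
  have h2 : ContDiff ℝ ((1:ℕ) + 1) W := by exact_mod_cast hC
  rw [contDiff_succ_iff_deriv] at h2
  obtain ⟨hd, -, hc1⟩ := h2
  have h1 : ContDiff ℝ ((0:ℕ) + 1) (deriv W) := by exact_mod_cast hc1
  rw [contDiff_succ_iff_deriv] at h1
  exact ⟨hd, h1.1, h1.2.2.continuous⟩

lemma second_deriv_nonpos_of_max {W : ℝ → ℝ} (hC : ContDiff ℝ 2 W) {M : ℝ}
    (hmax : ∀ q, W q ≤ W M) : deriv (deriv W) M ≤ 0 := by
  obtain ⟨hd1, hd2, _⟩ := diff_of_contDiff2 hC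
  by_contra hcon
  push_neg at hcon
  have hlm : IsLocalMax W M := Filter.Eventually.of_forall hmax
  have hW'M : deriv W M = 0 := hlm.deriv_eq_zero
  have hslope : Tendsto (slope (deriv W) M) (𝓝[≠] M) (𝓝 (deriv (deriv W) M)) :=
    hasDerivAt_iff_tendsto_slope.mp (hd2 M).hasDerivAt
  have h2 : ∀ᶠ x in 𝓝[≠] M, 0 < slope (deriv W) M x :=
    hslope.eventually (eventually_gt_nhds hcon)
  have h3 : ∀ᶠ x in 𝓝[>] M, 0 < slope (deriv W) M x :=
    h2.filter_mono (nhdsWithin_mono M (fun x (hx : M < x) => Set.mem_compl_singleton_iff.mpr (ne_of_gt hx)))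
  obtain ⟨b, hb, hsub⟩ := mem_nhdsGT_iff_exists_Ioo_subset.mp h3
  have hmono : StrictMonoOn W (Icc M b) := by
    apply strictMonoOn_of_deriv_pos (convex_Icc M b) hd1.continuous.continuousOn
    intro x hx
    rw [interior_Icc] at hx
    have hsl : 0 < slope (deriv W) M x := hsub hx
    rw [slope_def_field, hW'M, sub_zero] at hsl
    have hxM : 0 < x - M := sub_pos.mpr hx.1
    have := mul_pos hsl hxM
    rwa [div_mul_cancel₀ _ (ne_of_gt hxM)] at this
  have := hmono (left_mem_Icc.mpr (le_of_lt hb)) (right_mem_Icc.mpr (le_of_lt hb)) hb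
  exact absurd (hmax b) (not_le.mpr this)


lemma taylor_right {W : ℝ → ℝ} (hC : ContDiff ℝ 2 W) (hd1 : Differentiable ℝ W)
    (hd2 : Differentiable ℝ (deriv W)) (M t : ℝ) (ht : 0 < t) :
    ∃ ξ ∈ Ioo M (M + t),
      W (M + t) - W M - deriv W M * t = deriv (deriv W) ξ * t ^ 2 / 2 := by
  have hx : M < M + t := by linarith
  have hs : UniqueDiffOn ℝ (Icc M (M + t)) := uniqueDiffOn_Icc hx
  have heq1 : ∀ x ∈ Ioo M (M + t),
      iteratedDerivWithin 1 W (Icc M (M + t)) x = deriv W x := by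
    intro x hxx
    rw [iteratedDerivWithin_one,
      derivWithin_of_mem_nhds (Icc_mem_nhds hxx.1 hxx.2)]
  have hf : ContDiffOn ℝ 1 W (Icc M (M + t)) :=
    (hC.of_le (by norm_num)).contDiffOn
  have hf' : DifferentiableOn ℝ (iteratedDerivWithin 1 W (Icc M (M + t)))
      (Ioo M (M + t)) :=
    (hd2.differentiableOn).congr heq1
  obtain ⟨ξ, hξ, hT⟩ := taylor_mean_remainder_lagrange (f := W) (n := 1) hx.ne
    (by rw [uIcc_of_le hx.le]; exact hf) (by rw [uIcc_of_le hx.le, uIoo_of_le hx.le]; exact hf')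
  rw [uIcc_of_le hx.le] at hT
  rw [uIoo_of_le hx.le] at hξ
  refine ⟨ξ, hξ, ?_⟩
  have h2 : iteratedDerivWithin 2 W (Icc M (M + t)) ξ = deriv (deriv W) ξ := by
    rw [iteratedDerivWithin_succ,
      derivWithin_of_mem_nhds (Icc_mem_nhds hξ.1 hξ.2)]
    have hev : iteratedDerivWithin 1 W (Icc M (M + t)) =ᶠ[𝓝 ξ] deriv W :=
      Filter.eventuallyEq_of_mem (isOpen_Ioo.mem_nhds hξ) heq1
    exact hev.deriv_eq
  have hTay : taylorWithinEval W 1 (Icc M (M + t)) M (M + t)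
      = W M + deriv W M * t := by
    rw [show (1:ℕ) = 0 + 1 from rfl, taylorWithinEval_succ, taylor_within_zero_eval]
    simp only [Nat.factorial, Nat.cast_one, pow_one, smul_eq_mul]
    rw [iteratedDerivWithin_one,
      DifferentiableAt.derivWithin (hd1 M) (hs _ (left_mem_Icc.mpr hx.le))]
    ring_nf
  rw [hTay] at hT
  rw [h2] at hT
  have : (M + t - M) = t := by ring
  rw [this] at hT
  norm_num at hT
  linarith [hT]



lemma taylor_left {W : ℝ → ℝ} (hC : ContDiff ℝ 2 W) (M t : ℝ) (ht : 0 < t) :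
    ∃ ξ ∈ Ioo (M - t) M,
      W (M - t) - W M + deriv W M * t = deriv (deriv W) ξ * t ^ 2 / 2 := by
  set g := fun y => W (2 * M - y) with hgdef
  have hg : ContDiff ℝ 2 g := hC.comp (contDiff_const.sub contDiff_id)
  obtain ⟨hgd1, hgd2, _⟩ := diff_of_contDiff2 hg
  have hdg : deriv g = fun y => -deriv W (2 * M - y) :=
    funext fun y => deriv_comp_const_sub W (2 * M) y
  have hddg : ∀ y, deriv (deriv g) y = deriv (deriv W) (2 * M - y) := by
    intro y
    rw [hdg]
    have : (fun y => -deriv W (2 * M - y)) = fun y => -((fun z => deriv W (2 * M - z)) y) := rfl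
    rw [this, deriv.fun_neg, deriv_comp_const_sub (deriv W) (2 * M) y, neg_neg]
  obtain ⟨ξ, hξ, hT⟩ := taylor_right hg hgd1 hgd2 M t ht
  refine ⟨2 * M - ξ, ⟨by cases hξ with | intro a b => linarith, by
    cases hξ with | intro a b => linarith⟩, ?_⟩
  have h1 : g (M + t) = W (M - t) := by rw [hgdef]; norm_num; ring_nf
  have h2 : g M = W M := by rw [hgdef]; norm_num; ring_nf
  have h3 : deriv g M = -deriv W M := by rw [hdg]; norm_num; ring_nf
  rw [h1, h2, h3, hddg] at hT
  linarith [hT]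

lemma quad_bound {W : ℝ → ℝ} (hC : ContDiff ℝ 2 W) {M : ℝ} (hd0 : deriv W M = 0)
    {ε : ℝ} (hε : 0 < ε) :
    ∃ δ > (0:ℝ), ∀ x : ℝ, |x| ≤ δ →
      (-(deriv (deriv W) M) / 2 - ε) * x ^ 2 ≤ W M - W (M + x) ∧
      W M - W (M + x) ≤ (-(deriv (deriv W) M) / 2 + ε) * x ^ 2 := by
  obtain ⟨hd1, hd2, hcont⟩ := diff_of_contDiff2 hC
  have hca : ContinuousAt (deriv (deriv W)) M := hcont.continuousAt
  obtain ⟨δ0, hδ0, hδ0'⟩ := Metric.continuousAt_iff.mp hca (2 * ε) (by linarith)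
  refine ⟨δ0 / 2, by linarith, ?_⟩
  intro x hx
  have key : ∀ ξ : ℝ, |ξ - M| < δ0 →
      W M - W (M + x) = -(deriv (deriv W) ξ) / 2 * x ^ 2 →
      (-(deriv (deriv W) M) / 2 - ε) * x ^ 2 ≤ W M - W (M + x) ∧
      W M - W (M + x) ≤ (-(deriv (deriv W) M) / 2 + ε) * x ^ 2 := by
    intro ξ hξ heq
    have h1 : |deriv (deriv W) ξ - deriv (deriv W) M| < 2 * ε := by
      have := hδ0' (show dist ξ M < δ0 by rwa [Real.dist_eq])
      rwa [Real.dist_eq] at this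
    rw [abs_lt] at h1
    constructor <;> rw [heq] <;> nlinarith [sq_nonneg x, h1.1, h1.2]
  rcases lt_trichotomy x 0 with hneg | hzero | hpos
  · obtain ⟨ξ, hξ, hT⟩ := taylor_left hC M (-x) (by linarith)
    rw [hd0] at hT
    have hMx : M - -x = M + x := by ring
    rw [hMx] at hT
    apply key ξ
    · rw [abs_lt]; rw [abs_of_neg hneg] at hx
      cases hξ with | intro a b => constructor <;> linarith
    · have : (-x) ^ 2 = x ^ 2 := by ring
      rw [this] at hT; linarith
  · subst hzero; norm_num
  · obtain ⟨ξ, hξ, hT⟩ := taylor_right hC hd1 hd2 M x hpos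
    rw [hd0] at hT
    apply key ξ
    · rw [abs_lt]; rw [abs_of_pos hpos] at hx
      cases hξ with | intro a b => constructor <;> linarith
    · linarith


lemma periodic_deriv' {f : ℝ → ℝ} (hf : Function.Periodic f 1) :
    Function.Periodic (deriv f) 1 := by
  intro x
  have h : (fun y => f (y + 1)) = f := funext hf
  calc deriv f (x + 1) = deriv (fun y => f (y + 1)) x := (deriv_comp_add_const f 1 x).symm
    _ = deriv f x := by rw [h]

lemma periodic_val {f : ℝ → ℝ} (hf : Function.Periodic f 1) (x : ℝ) :
    f (Int.fract x) = f x := by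
  rw [Int.fract]
  have := hf.sub_zsmul_eq (x := x) ⌊x⌋
  rwa [zsmul_eq_mul, mul_one] at this

lemma argmax_uniq {W : ℝ → ℝ} (hper : Function.Periodic W 1) {M : ℝ}
    (hmax : ∀ q, W q ≤ W M)
    (hEU : ∃! q, q ∈ Ico (0:ℝ) 1 ∧ IsLocalMax W q) :
    ∀ q, W q = W M → ∃ n : ℤ, q = M + n := by
  obtain ⟨p, _, hpuniq⟩ := hEU
  have key : ∀ x : ℝ, W x = W M → Int.fract x = p := by
    intro x hx
    apply hpuniq
    refine ⟨⟨Int.fract_nonneg x, Int.fract_lt_one x⟩, ?_⟩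
    apply Filter.Eventually.of_forall
    intro y
    rw [periodic_val hper x, hx]
    exact hmax y
  intro q hq
  have h1 : Int.fract q = p := key q hq
  have h2 : Int.fract M = p := key M rfl
  refine ⟨⌊q⌋ - ⌊M⌋, ?_⟩
  have : Int.fract q = Int.fract M := by rw [h1, h2]
  rw [Int.fract, Int.fract] at this
  push_cast
  linarith [this]

lemma second_deriv_neg {W : ℝ → ℝ} (hC : ContDiff ℝ 2 W)
    (hper : Function.Periodic W 1) {M : ℝ} (hmax : ∀ q, W q ≤ W M)
    (hND : ∀ q ∈ Ico (0:ℝ) 1, IsLocalMax W q → deriv (deriv W) q ≠ 0) :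
    deriv (deriv W) M < 0 := by
  have hdd : Function.Periodic (deriv (deriv W)) 1 := periodic_deriv' (periodic_deriv' hper)
  have hne : deriv (deriv W) M ≠ 0 := by
    have hval : deriv (deriv W) (Int.fract M) = deriv (deriv W) M := periodic_val hdd M
    have hlm : IsLocalMax W (Int.fract M) := by
      apply Filter.Eventually.of_forall
      intro y
      rw [periodic_val hper M]
      exact hmax y
    have := hND (Int.fract M) ⟨Int.fract_nonneg M, Int.fract_lt_one M⟩ hlm
    rwa [hval] at this
  exact lt_of_le_of_ne (second_deriv_nonpos_of_max hC hmax) hne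


lemma G_cont {W : ℝ → ℝ} (hWc : Continuous W) :
    Continuous (fun c => ∫ q in (0:ℝ)..1, Real.sqrt (W q - c)) := by
  have hsc : ∀ c : ℝ, Continuous fun q : ℝ => Real.sqrt (W q - c) := fun c =>
    Real.continuous_sqrt.comp (hWc.sub continuous_const)
  have hint : ∀ c u v : ℝ, IntervalIntegrable (fun q => Real.sqrt (W q - c)) volume u v :=
    fun c u v => (hsc c).intervalIntegrable u v
  rw [Metric.continuous_iff]
  intro c ε hε
  refine ⟨ε ^ 2, by positivity, ?_⟩
  intro c' hcc
  rw [Real.dist_eq] at hcc ⊢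
  have key : |(∫ q in (0:ℝ)..1, Real.sqrt (W q - c')) - ∫ q in (0:ℝ)..1, Real.sqrt (W q - c)|
      ≤ Real.sqrt |c' - c| := by
    rw [← intervalIntegral.integral_sub (hint c' 0 1) (hint c 0 1)]
    have h1 : |∫ q in (0:ℝ)..1, (Real.sqrt (W q - c') - Real.sqrt (W q - c))|
        ≤ ∫ q in (0:ℝ)..1, |Real.sqrt (W q - c') - Real.sqrt (W q - c)| :=
      intervalIntegral.abs_integral_le_integral_abs (by norm_num)
    have h2 : (∫ q in (0:ℝ)..1, |Real.sqrt (W q - c') - Real.sqrt (W q - c)|)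
        ≤ ∫ q in (0:ℝ)..1, Real.sqrt |c' - c| := by
      apply intervalIntegral.integral_mono_on (by norm_num)
        (((hsc c').sub (hsc c)).abs.intervalIntegrable 0 1)
        (intervalIntegrable_const)
      intro q hq
      have := sqrt_abs_sub_le (W q - c') (W q - c)
      have heq : (W q - c') - (W q - c) = c - c' := by ring
      rw [heq] at this
      rwa [abs_sub_comm c c'] at this
    have h3 : (∫ q in (0:ℝ)..1, Real.sqrt |c' - c|) = Real.sqrt |c' - c| := by
      rw [intervalIntegral.integral_const]; simp
    linarith
  have h4 : Real.sqrt |c' - c| < ε := by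
    have := Real.sqrt_lt_sqrt (abs_nonneg _) hcc
    rwa [Real.sqrt_sq hε.le] at this
  linarith [key]

lemma G_zero {W : ℝ → ℝ} {M : ℝ} (hmax : ∀ q, W q ≤ W M) :
    (∫ q in (0:ℝ)..1, Real.sqrt (W q - W M)) = 0 := by
  have h : EqOn (fun q => Real.sqrt (W q - W M)) (fun _ => (0:ℝ)) (uIcc (0:ℝ) 1) :=
    fun q _ => Real.sqrt_eq_zero'.mpr (by linarith [hmax q])
  rw [intervalIntegral.integral_congr h, intervalIntegral.integral_zero]

lemma G_anti {W : ℝ → ℝ} (hWc : Continuous W) (hper : Function.Periodic W 1)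
    {M : ℝ} (hmax : ∀ q, W q ≤ W M) :
    StrictAntiOn (fun c => ∫ q in (0:ℝ)..1, Real.sqrt (W q - c)) (Iic (W M)) := by
  have hsc : ∀ c : ℝ, Continuous fun q : ℝ => Real.sqrt (W q - c) := fun c =>
    Real.continuous_sqrt.comp (hWc.sub continuous_const)
  have hint : ∀ c u v : ℝ, IntervalIntegrable (fun q => Real.sqrt (W q - c)) volume u v :=
    fun c u v => (hsc c).intervalIntegrable u v
  intro c hc c' hc' hlt
  simp only [mem_Iic] at hc hc'
  set h := fun q => Real.sqrt (W q - c) - Real.sqrt (W q - c') with hhdef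
  have hhc : Continuous h := (hsc c).sub (hsc c')
  have hhnn : ∀ q, 0 ≤ h q := by
    intro q
    have : Real.sqrt (W q - c') ≤ Real.sqrt (W q - c) :=
      Real.sqrt_le_sqrt (by linarith)
    simp only [hhdef]; linarith
  -- the point where W attains its max within [0,1)
  set M₀ := Int.fract M with hM₀def
  have hM₀mem : M₀ ∈ Ico (0:ℝ) 1 := ⟨Int.fract_nonneg M, Int.fract_lt_one M⟩
  have hWM₀ : W M₀ = W M := by
    rw [hM₀def, Int.fract]
    have := hper.sub_zsmul_eq (x := M) ⌊M⌋
    rwa [zsmul_eq_mul, mul_one] at this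
  have hpos : 0 < h M₀ := by
    have h1 : Real.sqrt (W M₀ - c') < Real.sqrt (W M₀ - c) := by
      apply Real.sqrt_lt_sqrt (by rw [hWM₀]; linarith)
      linarith
    simp only [hhdef]; linarith
  -- find a small interval around M₀ on which h > h M₀ / 2
  have hopen : IsOpen (h ⁻¹' Ioi (h M₀ / 2)) := isOpen_Ioi.preimage hhc
  have hmem : M₀ ∈ h ⁻¹' Ioi (h M₀ / 2) := by
    simp only [mem_preimage, mem_Ioi]; exact half_lt_self hpos
  obtain ⟨r, hr, hball⟩ := Metric.isOpen_iff.mp hopen M₀ hmem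
  set v := min (M₀ + r / 2) 1 with hvdef
  have huv : M₀ < v := lt_min (by linarith) hM₀mem.2
  have hv1 : v ≤ 1 := min_le_right _ _
  have hsub : Icc M₀ v ⊆ h ⁻¹' Ioi (h M₀ / 2) := by
    intro x hx
    apply hball
    rw [Metric.mem_ball, Real.dist_eq, abs_lt]
    have : x ≤ M₀ + r / 2 := le_trans hx.2 (min_le_left _ _)
    constructor <;> [linarith [hx.1]; linarith [hx.2]]
  have hkey : 0 < (∫ q in (0:ℝ)..1, Real.sqrt (W q - c)) - ∫ q in (0:ℝ)..1, Real.sqrt (W q - c') := by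
    rw [← intervalIntegral.integral_sub (hint c 0 1) (hint c' 0 1)]
    have hsplit : (∫ q in (0:ℝ)..1, h q)
        = (∫ q in (0:ℝ)..M₀, h q) + (∫ q in M₀..v, h q) + (∫ q in v..1, h q) := by
      rw [intervalIntegral.integral_add_adjacent_intervals
          (hhc.intervalIntegrable 0 M₀) (hhc.intervalIntegrable M₀ v),
        intervalIntegral.integral_add_adjacent_intervals
          (hhc.intervalIntegrable 0 v) (hhc.intervalIntegrable v 1)]
    have h1 : 0 ≤ ∫ q in (0:ℝ)..M₀, h q :=
      intervalIntegral.integral_nonneg hM₀mem.1 (fun u _ => hhnn u)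
    have h3 : 0 ≤ ∫ q in v..1, h q :=
      intervalIntegral.integral_nonneg hv1 (fun u _ => hhnn u)
    have h2 : (v - M₀) * (h M₀ / 2) ≤ ∫ q in M₀..v, h q := by
      have : (∫ q in M₀..v, h M₀ / 2) ≤ ∫ q in M₀..v, h q := by
        apply intervalIntegral.integral_mono_on huv.le intervalIntegrable_const
          (hhc.intervalIntegrable M₀ v)
        intro x hx
        exact le_of_lt (hsub hx)
      rwa [intervalIntegral.integral_const, smul_eq_mul] at this
    have : (0:ℝ) < (v - M₀) * (h M₀ / 2) := by
      apply mul_pos (by linarith) (half_pos hpos)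
    calc (0:ℝ) < (v - M₀) * (h M₀ / 2) := this
      _ ≤ ∫ q in M₀..v, h q := h2
      _ ≤ _ := by rw [hsplit]; linarith [h1, h3]
  linarith [hkey]


lemma rpow_neg_half_eq {t : ℝ} (ht : 0 < t) : t ^ (-(1:ℝ)/2) = 1 / Real.sqrt t := by
  rw [show -(1:ℝ)/2 = -(1/2) by ring, Real.rpow_neg ht.le, ← Real.sqrt_eq_rpow]
  rw [one_div]

set_option maxHeartbeats 1000000 in
lemma G_lim {W : ℝ → ℝ} (hC : ContDiff ℝ 2 W) (hper : Function.Periodic W 1)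
    {M : ℝ} (hmax : ∀ q, W q ≤ W M)
    (huniq : ∀ q : ℝ, W q = W M → ∃ n : ℤ, q = M + n)
    (hW2 : deriv (deriv W) M < 0) :
    Tendsto (fun c => (∫ q in (0:ℝ)..1, Real.sqrt (W q - c)) / (W M - c))
      (𝓝[<] (W M)) (𝓝 (π * (-2 * deriv (deriv W) M) ^ (-(1:ℝ)/2))) := by
  obtain ⟨hd1, hd2, hc2⟩ := diff_of_contDiff2 hC
  have hWc : Continuous W := hd1.continuous
  have hsc : ∀ c : ℝ, Continuous fun q : ℝ => Real.sqrt (W q - c) := fun c =>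
    Real.continuous_sqrt.comp (hWc.sub continuous_const)
  set c₁ := W M with hc₁
  set a := -(deriv (deriv W) M) / 2 with ha
  have ha0 : 0 < a := by rw [ha]; linarith
  -- the limit value
  have hL : π * (-2 * deriv (deriv W) M) ^ (-(1:ℝ)/2) = π / (2 * Real.sqrt a) := by
    have h4a : -2 * deriv (deriv W) M = 4 * a := by rw [ha]; ring
    rw [h4a, rpow_neg_half_eq (by linarith), Real.sqrt_mul (by norm_num) a,
      show Real.sqrt 4 = 2 by
        rw [show (4:ℝ) = 2 ^ 2 by norm_num, Real.sqrt_sq (by norm_num)]]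
    ring
  rw [hL]
  set L := π / (2 * Real.sqrt a) with hLdef
  rw [Metric.tendsto_nhdsWithin_nhds]
  intro e he
  -- continuity of t ↦ π / (2 √t) at a
  have hφ : ContinuousAt (fun t : ℝ => π / (2 * Real.sqrt t)) a := by
    apply ContinuousAt.div continuousAt_const
      (continuousAt_const.mul Real.continuous_sqrt.continuousAt)
    exact mul_ne_zero two_ne_zero (Real.sqrt_pos.mpr ha0).ne'
  obtain ⟨ε₀, hε₀, hφ'⟩ := Metric.continuousAt_iff.mp hφ e he
  set ε := min (ε₀ / 2) (a / 2) with hεdef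
  have hε : 0 < ε := lt_min (by linarith) (by linarith)
  have hεa : ε < a := lt_of_le_of_lt (min_le_right _ _) (by linarith)
  have hφball : ∀ t : ℝ, |t - a| < ε₀ → |π / (2 * Real.sqrt t) - L| < e := by
    intro t ht
    have := hφ' (show dist t a < ε₀ by rwa [Real.dist_eq])
    rwa [Real.dist_eq] at this
  have hφp : |π / (2 * Real.sqrt (a + ε)) - L| < e := by
    apply hφball; rw [abs_of_nonneg (by linarith)]
    simp only [add_sub_cancel_left]
    calc ε ≤ ε₀ / 2 := min_le_left _ _
      _ < ε₀ := by linarith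
  have hφm : |π / (2 * Real.sqrt (a - ε)) - L| < e := by
    apply hφball; rw [abs_of_nonpos (by linarith), neg_sub]
    simp only [sub_sub_cancel]
    calc ε ≤ ε₀ / 2 := min_le_left _ _
      _ < ε₀ := by linarith
  -- quadratic bounds
  have hd0 : deriv W M = 0 :=
    IsLocalMax.deriv_eq_zero (Filter.Eventually.of_forall hmax)
  obtain ⟨δ', hδ', hquad⟩ := quad_bound hC hd0 hε
  set δ := min δ' (4⁻¹ : ℝ) with hδdef
  have hδ0 : 0 < δ := lt_min hδ' (by norm_num)
  have hδle : δ ≤ 4⁻¹ := min_le_right _ _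
  have hquad' : ∀ x : ℝ, |x| ≤ δ →
      (a - ε) * x ^ 2 ≤ c₁ - W (M + x) ∧ c₁ - W (M + x) ≤ (a + ε) * x ^ 2 := by
    intro x hx
    have := hquad x (le_trans hx (min_le_left _ _))
    constructor
    · calc (a - ε) * x ^ 2 = (-(deriv (deriv W) M) / 2 - ε) * x ^ 2 := by rw [ha]
        _ ≤ W M - W (M + x) := this.1
    · calc c₁ - W (M + x) ≤ (-(deriv (deriv W) M) / 2 + ε) * x ^ 2 := this.2
        _ = (a + ε) * x ^ 2 := by rw [ha]
  -- the compact region away from the max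
  set K := Icc (M - 2⁻¹) (M + 2⁻¹) \ Ioo (M - δ) (M + δ) with hKdef
  have hKc : IsCompact K :=
    (isCompact_Icc).diff isOpen_Ioo
  have hKne : K.Nonempty := by
    refine ⟨M + 2⁻¹, ⟨right_mem_Icc.mpr (by linarith), ?_⟩⟩
    rw [mem_Ioo]; push_neg; intro _; linarith
  have hKW : ∀ q ∈ K, W q < c₁ := by
    intro q hq
    rcases lt_or_eq_of_le (hmax q) with h | h
    · exact h
    · exfalso
      obtain ⟨n, hn⟩ := huniq q h
      obtain ⟨⟨h1, h2⟩, h3⟩ := hq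
      have hn2 : |(n : ℝ)| ≤ 2⁻¹ := by
        rw [abs_le]; constructor <;> [linarith [hn ▸ h1]; linarith [hn ▸ h2]]
      have : n = 0 := by
        by_contra hne
        have : (1:ℝ) ≤ |(n:ℝ)| := by
          rw [← Int.cast_abs]; exact_mod_cast Int.one_le_abs hne
        linarith
      rw [this] at hn
      simp at hn
      apply h3
      rw [hn, mem_Ioo]; constructor <;> linarith
  obtain ⟨q₀, hq₀K, hq₀max⟩ := hKc.exists_isMaxOn hKne hWc.continuousOn
  set η := c₁ - W q₀ with hηdef
  have hη : 0 < η := sub_pos.mpr (hKW q₀ hq₀K)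
  have hKle : ∀ q ∈ K, W q ≤ c₁ - η := by
    intro q hq
    have := hq₀max hq
    simp only [mem_setOf_eq] at this
    rw [hηdef]; linarith [this]
  -- choose d
  have hδhalf : δ ≤ 2⁻¹ := le_trans hδle (by norm_num)
  refine ⟨min η ((a - ε) * δ ^ 2), lt_min hη (mul_pos (by linarith) (by positivity)), ?_⟩
  intro c hcIio hcd
  rw [Real.dist_eq, abs_of_nonpos (by simp only [mem_Iio] at hcIio; linarith)] at hcd
  simp only [mem_Iio] at hcIio
  set s := c₁ - c with hsdef
  have hs0 : 0 < s := sub_pos.mpr hcIio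
  have hsη : s < η := lt_of_lt_of_le (by rw [hsdef]; linarith [hcd]) (min_le_left _ _)
  have hsδ : s < (a - ε) * δ ^ 2 := lt_of_lt_of_le (by rw [hsdef]; linarith [hcd]) (min_le_right _ _)
  -- Step 1: shift the integration interval
  have hperc : Function.Periodic (fun q => Real.sqrt (W q - c)) 1 := fun q => by
    simp [hper q]
  have hshift : (∫ q in (0:ℝ)..1, Real.sqrt (W q - c))
      = ∫ q in (M - 2⁻¹)..(M + 2⁻¹), Real.sqrt (W q - c) := by
    have h := hperc.intervalIntegral_add_eq 0 (M - 2⁻¹)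
    rw [zero_add] at h
    rw [show (M + 2⁻¹ : ℝ) = M - 2⁻¹ + 1 by ring]
    exact h
  -- Step 2: outer parts vanish
  have hint : ∀ u v : ℝ, IntervalIntegrable (fun q => Real.sqrt (W q - c)) volume u v :=
    fun u v => (hsc c).intervalIntegrable u v
  have hvanish : ∀ q : ℝ, q ∈ K → Real.sqrt (W q - c) = 0 := by
    intro q hq
    apply Real.sqrt_eq_zero'.mpr
    have := hKle q hq
    linarith
  have houter1 : ∫ q in (M - 2⁻¹)..(M - δ), Real.sqrt (W q - c) = 0 := by
    rw [← intervalIntegral.integral_zero (a := M - 2⁻¹) (b := M - δ) (E := ℝ)]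
    apply intervalIntegral.integral_congr
    intro q hq
    rw [uIcc_of_le (by linarith)] at hq
    exact hvanish q ⟨⟨hq.1, by linarith [hq.2]⟩, by
      rw [mem_Ioo]; push_neg; intro h; exfalso; linarith [hq.2]⟩
  have houter2 : ∫ q in (M + δ)..(M + 2⁻¹), Real.sqrt (W q - c) = 0 := by
    rw [← intervalIntegral.integral_zero (a := M + δ) (b := M + 2⁻¹) (E := ℝ)]
    apply intervalIntegral.integral_congr
    intro q hq
    rw [uIcc_of_le (by linarith)] at hq
    exact hvanish q ⟨⟨by linarith [hq.1], hq.2⟩, by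
      rw [mem_Ioo]; push_neg; intro _; linarith [hq.1]⟩
  have hmid : (∫ q in (0:ℝ)..1, Real.sqrt (W q - c))
      = ∫ q in (M - δ)..(M + δ), Real.sqrt (W q - c) := by
    rw [hshift,
      ← intervalIntegral.integral_add_adjacent_intervals (a := M - 2⁻¹) (b := M - δ)
        (c := M + 2⁻¹) (hint _ _) (hint _ _),
      ← intervalIntegral.integral_add_adjacent_intervals (a := M - δ) (b := M + δ)
        (c := M + 2⁻¹) (hint _ _) (hint _ _), houter1, houter2]
    ring
  -- Step 3: translate
  have htrans : (∫ q in (M - δ)..(M + δ), Real.sqrt (W q - c))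
      = ∫ x in (-δ)..δ, Real.sqrt (W (M + x) - c) := by
    rw [show M - δ = M + -δ by ring]
    exact (intervalIntegral.integral_comp_add_left (fun q => Real.sqrt (W q - c)) M).symm
  -- Step 4: squeeze the middle integral
  have hbound : ∀ x ∈ Icc (-δ) δ,
      Real.sqrt (s - (a + ε) * x ^ 2) ≤ Real.sqrt (W (M + x) - c) ∧
      Real.sqrt (W (M + x) - c) ≤ Real.sqrt (s - (a - ε) * x ^ 2) := by
    intro x hx
    have hxabs : |x| ≤ δ := abs_le.mpr ⟨hx.1, hx.2⟩
    obtain ⟨hq1, hq2⟩ := hquad' x hxabs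
    constructor
    · apply Real.sqrt_le_sqrt; rw [hsdef]; linarith
    · apply Real.sqrt_le_sqrt; rw [hsdef]; linarith
  have hip : IntervalIntegrable (fun x => Real.sqrt (s - (a + ε) * x ^ 2)) volume (-δ) δ :=
    (Real.continuous_sqrt.comp (continuous_const.sub (continuous_const.mul (continuous_pow 2)))).intervalIntegrable _ _
  have him : IntervalIntegrable (fun x => Real.sqrt (s - (a - ε) * x ^ 2)) volume (-δ) δ :=
    (Real.continuous_sqrt.comp (continuous_const.sub (continuous_const.mul (continuous_pow 2)))).intervalIntegrable _ _
  have hiW : IntervalIntegrable (fun x => Real.sqrt (W (M + x) - c)) volume (-δ) δ :=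
    (Real.continuous_sqrt.comp ((hWc.comp (continuous_const.add continuous_id)).sub continuous_const)).intervalIntegrable _ _
  have hlow : (∫ x in (-δ)..δ, Real.sqrt (s - (a + ε) * x ^ 2))
      ≤ ∫ x in (-δ)..δ, Real.sqrt (W (M + x) - c) :=
    intervalIntegral.integral_mono_on (by linarith) hip hiW (fun x hx => (hbound x hx).1)
  have hhigh : (∫ x in (-δ)..δ, Real.sqrt (W (M + x) - c))
      ≤ ∫ x in (-δ)..δ, Real.sqrt (s - (a - ε) * x ^ 2) :=
    intervalIntegral.integral_mono_on (by linarith) hiW him (fun x hx => (hbound x hx).2)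
  have hlowval : (∫ x in (-δ)..δ, Real.sqrt (s - (a + ε) * x ^ 2))
      = π * s / (2 * Real.sqrt (a + ε)) := by
    apply integral_sqrt_parabola (by linarith) hs0
    rw [show δ = Real.sqrt (δ ^ 2) by rw [Real.sqrt_sq hδ0.le]]
    apply Real.sqrt_le_sqrt
    rw [div_le_iff₀ (by linarith)]
    nlinarith [hsδ, hε, sq_nonneg δ]
  have hhighval : (∫ x in (-δ)..δ, Real.sqrt (s - (a - ε) * x ^ 2))
      = π * s / (2 * Real.sqrt (a - ε)) := by
    apply integral_sqrt_parabola (by linarith) hs0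
    rw [show δ = Real.sqrt (δ ^ 2) by rw [Real.sqrt_sq hδ0.le]]
    apply Real.sqrt_le_sqrt
    rw [div_le_iff₀ (by linarith)]
    linarith [hsδ]
  -- final computation
  have hGc : π * s / (2 * Real.sqrt (a + ε)) ≤ (∫ q in (0:ℝ)..1, Real.sqrt (W q - c)) ∧
      (∫ q in (0:ℝ)..1, Real.sqrt (W q - c)) ≤ π * s / (2 * Real.sqrt (a - ε)) := by
    rw [hmid, htrans]
    exact ⟨le_of_eq_of_le hlowval.symm hlow, le_of_le_of_eq hhigh hhighval⟩
  rw [Real.dist_eq]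
  have hsqp : Real.sqrt (a + ε) ≠ 0 := by positivity
  have hsqm : Real.sqrt (a - ε) ≠ 0 := by
    have : (0:ℝ) < Real.sqrt (a - ε) := Real.sqrt_pos.mpr (by linarith)
    linarith
  have hdiv1 : π * s / (2 * Real.sqrt (a + ε)) / s = π / (2 * Real.sqrt (a + ε)) := by
    field_simp
  have hdiv2 : π * s / (2 * Real.sqrt (a - ε)) / s = π / (2 * Real.sqrt (a - ε)) := by
    field_simp
  obtain ⟨hg1, hg2⟩ := hGc
  have h1 : π / (2 * Real.sqrt (a + ε)) ≤ (∫ q in (0:ℝ)..1, Real.sqrt (W q - c)) / s := by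
    rw [← hdiv1]
    gcongr
  have h2 : (∫ q in (0:ℝ)..1, Real.sqrt (W q - c)) / s ≤ π / (2 * Real.sqrt (a - ε)) := by
    rw [← hdiv2]
    gcongr
  rw [abs_lt] at hφp hφm ⊢
  constructor <;> [linarith [hφp.1, h1]; linarith [hφm.2, h2]]

/-- **Monotonicity, endpoint values and endpoint derivatives of the action functions.**
For `(U₁,U₂) ∈ Ω`, with `c₁ = U₁(M₁)` the maximum of `U₁` and `c₄ = U₂(m₂)` the minimum
of `U₂`: `F₁` is continuous and strictly decreasing on `[c₄,c₁]`, `F₁(c₁) = 0`, and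
`F₁(c)/(c₁-c) → π(-2U₁''(M₁))^{-1/2}` as `c → c₁⁻`; `F₂` is continuous and strictly
increasing on `[c₄,c₁]`, `F₂(c₄) = 0`, and `F₂(c)/(c-c₄) → π(2U₂''(m₂))^{-1/2}`
as `c → c₄⁺`. -/
theorem action_functions_monotone_endpoints (U₁ U₂ : ℝ → ℝ) (h : InOmega U₁ U₂)
    (M₁ m₂ : ℝ) (hM₁ : ∀ q, U₁ q ≤ U₁ M₁) (hm₂ : ∀ q, U₂ m₂ ≤ U₂ q) :
    ContinuousOn (F₁ U₁) (Set.Icc (U₂ m₂) (U₁ M₁)) ∧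
    StrictAntiOn (F₁ U₁) (Set.Icc (U₂ m₂) (U₁ M₁)) ∧
    F₁ U₁ (U₁ M₁) = 0 ∧
    Filter.Tendsto (fun c => F₁ U₁ c / (U₁ M₁ - c))
      (nhdsWithin (U₁ M₁) (Set.Iio (U₁ M₁)))
      (nhds (π * (-2 * deriv (deriv U₁) M₁) ^ (-(1:ℝ)/2))) ∧
    ContinuousOn (F₂ U₂) (Set.Icc (U₂ m₂) (U₁ M₁)) ∧
    StrictMonoOn (F₂ U₂) (Set.Icc (U₂ m₂) (U₁ M₁)) ∧
    F₂ U₂ (U₂ m₂) = 0 ∧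
    Filter.Tendsto (fun c => F₂ U₂ c / (c - U₂ m₂))
      (nhdsWithin (U₂ m₂) (Set.Ioi (U₂ m₂)))
      (nhds (π * (2 * deriv (deriv U₂) m₂) ^ (-(1:ℝ)/2))) := by
  obtain ⟨hC₁, hC₂, hp₁, hp₂, hO₁, hO₂, -⟩ := h
  have hper₁ : Function.Periodic U₁ 1 := hp₁
  have hper₂ : Function.Periodic U₂ 1 := hp₂
  have hC₁2 : ContDiff ℝ 2 U₁ := hC₁.of_le (WithTop.coe_le_coe.mpr le_top)
  have hC₂2 : ContDiff ℝ 2 U₂ := hC₂.of_le (WithTop.coe_le_coe.mpr le_top)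
  have huniq₁ : ∀ q, U₁ q = U₁ M₁ → ∃ n : ℤ, q = M₁ + n := argmax_uniq hper₁ hM₁ hO₁.2.1
  have hW2₁ : deriv (deriv U₁) M₁ < 0 :=
    second_deriv_neg hC₁2 hper₁ hM₁ (fun q hq hm => hO₁.2.2 q hq (Or.inr hm))
  -- data for V = -U₂
  have hCV : ContDiff ℝ 2 (fun q => -U₂ q) := hC₂2.neg
  have hperV : Function.Periodic (fun q => -U₂ q) 1 := fun x => by simp [hper₂ x]
  have hmaxV : ∀ q, -U₂ q ≤ -U₂ m₂ := fun q => neg_le_neg (hm₂ q)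
  have hiff : ∀ q, IsLocalMax (fun q => -U₂ q) q ↔ IsLocalMin U₂ q := by
    intro q
    constructor
    · intro hmx
      exact hmx.mono (fun x hx => by simpa using hx)
    · intro hmn
      exact hmn.mono (fun x hx => by simpa using hx)
  have hEUV : ∃! q, q ∈ Set.Ico (0:ℝ) 1 ∧ IsLocalMax (fun q => -U₂ q) q := by
    obtain ⟨p, hp1, hp2⟩ := hO₂.1
    exact ⟨p, ⟨hp1.1, (hiff p).mpr hp1.2⟩, fun y hy => hp2 y ⟨hy.1, (hiff y).mp hy.2⟩⟩
  have hVdd : ∀ y, deriv (deriv (fun q => -U₂ q)) y = -deriv (deriv U₂) y := by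
    intro y
    have h1 : deriv (fun q => -U₂ q) = fun y => -deriv U₂ y := funext fun y => deriv.neg
    rw [h1, deriv.fun_neg]
  have hNDV : ∀ q ∈ Set.Ico (0:ℝ) 1, IsLocalMax (fun q => -U₂ q) q →
      deriv (deriv (fun q => -U₂ q)) q ≠ 0 := by
    intro q hq hm
    rw [hVdd q]
    exact neg_ne_zero.mpr (hO₂.2.2 q hq (Or.inl ((hiff q).mp hm)))
  have huniqV : ∀ q, -U₂ q = -U₂ m₂ → ∃ n : ℤ, q = m₂ + n := argmax_uniq hperV hmaxV hEUV
  have hW2V : deriv (deriv (fun q => -U₂ q)) m₂ < 0 := second_deriv_neg hCV hperV hmaxV hNDV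
  have hF₁fun : F₁ U₁ = fun c => ∫ q in (0:ℝ)..1, Real.sqrt (U₁ q - c) := rfl
  have hF₂ : ∀ c : ℝ, F₂ U₂ c = ∫ q in (0:ℝ)..1, Real.sqrt (-U₂ q - (-c)) := by
    intro c
    rw [F₂]
    apply intervalIntegral.integral_congr
    intro q _
    congr 1
    ring
  have hGVc : Continuous (fun c => ∫ q in (0:ℝ)..1, Real.sqrt (-U₂ q - c)) :=
    G_cont (W := fun q => -U₂ q) hC₂.continuous.neg
  have hGVanti : StrictAntiOn (fun c => ∫ q in (0:ℝ)..1, Real.sqrt (-U₂ q - c))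
      (Set.Iic (-U₂ m₂)) := G_anti (W := fun q => -U₂ q) hC₂.continuous.neg hperV hmaxV
  refine ⟨?_, ?_, ?_, ?_, ?_, ?_, ?_, ?_⟩
  · rw [hF₁fun]
    exact (G_cont hC₁.continuous).continuousOn
  · rw [hF₁fun]
    exact (G_anti hC₁.continuous hper₁ hM₁).mono Set.Icc_subset_Iic_self
  · rw [hF₁fun]
    exact G_zero hM₁
  · rw [hF₁fun]
    exact G_lim hC₁2 hper₁ hM₁ huniq₁ hW2₁
  · have heq : F₂ U₂ = fun c => (fun c' => ∫ q in (0:ℝ)..1, Real.sqrt (-U₂ q - c')) (-c) :=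
      funext hF₂
    rw [heq]
    exact (hGVc.comp continuous_neg).continuousOn
  · intro x hx y hy hxy
    rw [hF₂ x, hF₂ y]
    exact hGVanti (Set.mem_Iic.mpr (by linarith [hy.1])) (Set.mem_Iic.mpr (by linarith [hx.1]))
      (by linarith)
  · rw [hF₂]
    exact G_zero (W := fun q => -U₂ q) hmaxV
  · have hlimV := G_lim (W := fun q => -U₂ q) hCV hperV hmaxV huniqV hW2V
    have hconst : π * (-2 * deriv (deriv (fun q => -U₂ q)) m₂) ^ (-(1:ℝ)/2)
        = π * (2 * deriv (deriv U₂) m₂) ^ (-(1:ℝ)/2) := by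
      rw [hVdd m₂, show -2 * -deriv (deriv U₂) m₂ = 2 * deriv (deriv U₂) m₂ from by ring]
    rw [hconst] at hlimV
    have hneg : Filter.Tendsto (fun c : ℝ => -c) (nhdsWithin (U₂ m₂) (Set.Ioi (U₂ m₂)))
        (nhdsWithin (-U₂ m₂) (Set.Iio (-U₂ m₂))) := by
      apply ContinuousWithinAt.tendsto_nhdsWithin
        (continuous_neg.continuousAt.continuousWithinAt)
      intro x hx
      simp only [Set.mem_Iio]
      exact neg_lt_neg hx
    have hcomp := hlimV.comp hneg
    apply hcomp.congr
    intro c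
    simp only [Function.comp]
    rw [hF₂ c]
    congr 1
    ring
end

section
/- Let (U₁,U₂) ∈ Ω. Then for every c ∈ (c₃,c₂) one has 8(F₂''(c)F₁'(c) − F₁''(c)F₂'(c)) = (∫₀¹ (c − U₂(q₂))^{−3/2} dq₂)(∫₀¹ (U₁(q₁) − c)^{−1/2} dq₁) + (∫₀¹ (U₁(q₁) − c)^{−3/2} dq₁)(∫₀¹ (c − U₂(q₂))^{−1/2} dq₂); in particular F₂''(c)F₁'(c) − F₁''(c)F₂'(c) > 0, so the curvature of the curve c ↦ (F₁(c),F₂(c)) does not vanish on (c₃,c₂). -/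
open Real Set Filter MeasureTheory

/-- Differentiation under the integral sign for `c ↦ ∫₀¹ (W q - c)^p`. -/
lemma hasDerivAt_J (W : ℝ → ℝ) (hW : Continuous W) (L : ℝ) (hL : ∀ q, L ≤ W q)
    (p : ℝ) (hp : p ≤ 1) (c : ℝ) (hc : c < L) :
    HasDerivAt (fun c => ∫ q in (0:ℝ)..1, (W q - c) ^ p)
      (-p * ∫ q in (0:ℝ)..1, (W q - c) ^ (p - 1)) c := by
  have hLc : 0 < L - c := sub_pos.2 hc
  set ε : ℝ := (L - c) / 2 with hεdef
  have hεpos : 0 < ε := by positivity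
  have key : ∀ x ∈ Metric.ball c ε, ∀ q : ℝ, ε ≤ W q - x := by
    intro x hx q
    have hx' : |x - c| < ε := by simpa [Real.dist_eq] using hx
    have : x - c < ε := (abs_lt.1 hx').2
    have h1 : L ≤ W q := hL q
    nlinarith [hL q]
  have hcont : ∀ x ∈ Metric.ball c ε, ∀ r : ℝ, Continuous fun q => (W q - x) ^ r := by
    intro x hx r
    apply (hW.sub continuous_const).rpow_const
    intro q
    exact Or.inl (ne_of_gt (lt_of_lt_of_le hεpos (key x hx q)))
  have hcmem : c ∈ Metric.ball c ε := Metric.mem_ball_self hεpos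
  have H := intervalIntegral.hasDerivAt_integral_of_dominated_loc_of_deriv_le
    (F := fun x q => (W q - x) ^ p) (F' := fun x q => -p * (W q - x) ^ (p - 1))
    (bound := fun _ => |p| * ε ^ (p - 1)) (μ := volume) (a := (0:ℝ)) (b := 1)
    (Metric.ball_mem_nhds c hεpos)
    (Filter.eventually_of_mem (Metric.ball_mem_nhds c hεpos)
      (fun x hx => ((hcont x hx p).aestronglyMeasurable).restrict))
    ((hcont c hcmem p).intervalIntegrable 0 1)
    ((continuous_const.mul (hcont c hcmem (p - 1))).aestronglyMeasurable.restrict)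
    (Filter.Eventually.of_forall (fun q _ x hx => by
      have h1 : ε ≤ W q - x := key x hx q
      have h2 : (W q - x) ^ (p - 1) ≤ ε ^ (p - 1) :=
        Real.rpow_le_rpow_of_nonpos hεpos h1 (by linarith)
      have h3 : 0 ≤ (W q - x) ^ (p - 1) :=
        Real.rpow_nonneg (le_trans hεpos.le h1) _
      calc ‖-p * (W q - x) ^ (p - 1)‖ = |p| * |(W q - x) ^ (p - 1)| := by
            rw [norm_mul]; simp [abs_neg]
        _ ≤ |p| * ε ^ (p - 1) := by
            rw [abs_of_nonneg h3]; exact mul_le_mul_of_nonneg_left h2 (abs_nonneg p)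
      ))
    (intervalIntegrable_const)
    (Filter.Eventually.of_forall (fun q _ x hx => by
      have hpos : 0 < W q - x := lt_of_lt_of_le hεpos (key x hx q)
      have inner : HasDerivAt (fun y => W q - y) (-1) x :=
        (hasDerivAt_id x).const_sub (W q)
      have outer : HasDerivAt (fun y : ℝ => y ^ p) (p * (W q - x) ^ (p - 1)) (W q - x) :=
        Real.hasDerivAt_rpow_const (Or.inl (ne_of_gt hpos))
      have := outer.comp x inner
      exact this.congr_deriv (by ring)))
  have h2 := H.2
  rwa [intervalIntegral.integral_const_mul] at h2

/-- Differentiation under the integral sign for `c ↦ ∫₀¹ (c - W q)^p`. -/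
lemma hasDerivAt_K (W : ℝ → ℝ) (hW : Continuous W) (M : ℝ) (hM : ∀ q, W q ≤ M)
    (p : ℝ) (hp : p ≤ 1) (c : ℝ) (hc : M < c) :
    HasDerivAt (fun c => ∫ q in (0:ℝ)..1, (c - W q) ^ p)
      (p * ∫ q in (0:ℝ)..1, (c - W q) ^ (p - 1)) c := by
  have h := hasDerivAt_J (fun q => -W q) (hW.neg) (-M) (fun q => neg_le_neg (hM q))
    p hp (-c) (by linarith)
  have h2 := h.comp c (hasDerivAt_neg c)
  have e1 : ((fun c => ∫ q in (0:ℝ)..1, ((fun q => -W q) q - c) ^ p) ∘ Neg.neg)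
      = fun c => ∫ q in (0:ℝ)..1, (c - W q) ^ p := by
    funext x
    simp only [Function.comp_apply]
    congr 1
    funext q
    congr 1
    ring
  rw [e1] at h2
  have e2 : (fun q => ((fun q => -W q) q - -c) ^ (p - 1))
      = fun q => (c - W q) ^ (p - 1) := by
    funext q; congr 1; ring
  rw [e2] at h2
  exact h2.congr_deriv (by ring)



/-- **Explicit formula for `8(F₂''F₁' - F₁''F₂')` on `(c₃,c₂)`, and nonvanishing of the
curvature there.** For `(U₁,U₂) ∈ Ω` and `c ∈ (c₃,c₂)`, where `c₂ = U₁(m₁)` is the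
minimum of `U₁` and `c₃ = U₂(M₂)` is the maximum of `U₂`, one has
`8(F₂''(c)F₁'(c) - F₁''(c)F₂'(c)) = (∫₀¹(c-U₂)^{-3/2})(∫₀¹(U₁-c)^{-1/2})
 + (∫₀¹(U₁-c)^{-3/2})(∫₀¹(c-U₂)^{-1/2})`, and in particular
`F₂''(c)F₁'(c) - F₁''(c)F₂'(c) > 0`. -/
theorem curvature_positive_middle_interval (U₁ U₂ : ℝ → ℝ) (h : InOmega U₁ U₂)
    (m₁ M₂ : ℝ) (hm₁ : ∀ q, U₁ m₁ ≤ U₁ q) (hM₂ : ∀ q, U₂ q ≤ U₂ M₂)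
    (c : ℝ) (hc : c ∈ Set.Ioo (U₂ M₂) (U₁ m₁)) :
    8 * (deriv (deriv (F₂ U₂)) c * deriv (F₁ U₁) c -
          deriv (deriv (F₁ U₁)) c * deriv (F₂ U₂) c) =
      (∫ q in (0:ℝ)..1, (c - U₂ q) ^ (-(3:ℝ)/2)) *
        (∫ q in (0:ℝ)..1, (U₁ q - c) ^ (-(1:ℝ)/2)) +
      (∫ q in (0:ℝ)..1, (U₁ q - c) ^ (-(3:ℝ)/2)) *
        (∫ q in (0:ℝ)..1, (c - U₂ q) ^ (-(1:ℝ)/2)) ∧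
    0 < deriv (deriv (F₂ U₂)) c * deriv (F₁ U₁) c -
          deriv (deriv (F₁ U₁)) c * deriv (F₂ U₂) c := by
  have hc1 : Continuous U₁ := h.1.continuous
  have hc2 : Continuous U₂ := h.2.1.continuous
  -- F₁ as an rpow integral
  have hF1J : F₁ U₁ = fun x => ∫ q in (0:ℝ)..1, (U₁ q - x) ^ ((1:ℝ)/2) := by
    funext x
    unfold F₁
    congr 1
    funext q
    exact Real.sqrt_eq_rpow _
  have hF2K : F₂ U₂ = fun x => ∫ q in (0:ℝ)..1, (x - U₂ q) ^ ((1:ℝ)/2) := by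
    funext x
    unfold F₂
    congr 1
    funext q
    exact Real.sqrt_eq_rpow _
  -- first derivatives on the relevant open sets
  have hd1 : ∀ x ∈ Set.Iio (U₁ m₁), deriv (F₁ U₁) x
      = -((1:ℝ)/2) * ∫ q in (0:ℝ)..1, (U₁ q - x) ^ (-(1:ℝ)/2) := by
    intro x hx
    have hder := hasDerivAt_J U₁ hc1 (U₁ m₁) hm₁ ((1:ℝ)/2) (by norm_num) x hx
    have he : ((1:ℝ)/2) - 1 = -(1:ℝ)/2 := by norm_num
    rw [he] at hder
    rw [hF1J]
    exact hder.deriv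
  have hd2 : ∀ x ∈ Set.Ioi (U₂ M₂), deriv (F₂ U₂) x
      = ((1:ℝ)/2) * ∫ q in (0:ℝ)..1, (x - U₂ q) ^ (-(1:ℝ)/2) := by
    intro x hx
    have hder := hasDerivAt_K U₂ hc2 (U₂ M₂) hM₂ ((1:ℝ)/2) (by norm_num) x hx
    have he : ((1:ℝ)/2) - 1 = -(1:ℝ)/2 := by norm_num
    rw [he] at hder
    rw [hF2K]
    exact hder.deriv
  -- second derivatives at c
  have hdd1 : deriv (deriv (F₁ U₁)) c
      = -((1:ℝ)/4) * ∫ q in (0:ℝ)..1, (U₁ q - c) ^ (-(3:ℝ)/2) := by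
    have hev : deriv (F₁ U₁) =ᶠ[nhds c]
        (fun x => -((1:ℝ)/2) * ∫ q in (0:ℝ)..1, (U₁ q - x) ^ (-(1:ℝ)/2)) :=
      Filter.eventuallyEq_of_mem (isOpen_Iio.mem_nhds hc.2) hd1
    rw [hev.deriv_eq]
    have hder := (hasDerivAt_J U₁ hc1 (U₁ m₁) hm₁ (-(1:ℝ)/2) (by norm_num) c hc.2).const_mul
      (-((1:ℝ)/2))
    have he : (-(1:ℝ)/2) - 1 = -(3:ℝ)/2 := by norm_num
    rw [he] at hder
    rw [hder.deriv]
    ring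
  have hdd2 : deriv (deriv (F₂ U₂)) c
      = -((1:ℝ)/4) * ∫ q in (0:ℝ)..1, (c - U₂ q) ^ (-(3:ℝ)/2) := by
    have hev : deriv (F₂ U₂) =ᶠ[nhds c]
        (fun x => ((1:ℝ)/2) * ∫ q in (0:ℝ)..1, (x - U₂ q) ^ (-(1:ℝ)/2)) :=
      Filter.eventuallyEq_of_mem (isOpen_Ioi.mem_nhds hc.1) hd2
    rw [hev.deriv_eq]
    have hder := (hasDerivAt_K U₂ hc2 (U₂ M₂) hM₂ (-(1:ℝ)/2) (by norm_num) c hc.1).const_mul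
      (((1:ℝ)/2))
    have he : (-(1:ℝ)/2) - 1 = -(3:ℝ)/2 := by norm_num
    rw [he] at hder
    rw [hder.deriv]
    ring
  -- positivity of all four integrals
  have hpos1 : ∀ e : ℝ, 0 < ∫ q in (0:ℝ)..1, (U₁ q - c) ^ e := by
    intro e
    apply intervalIntegral.intervalIntegral_pos_of_pos
    · exact ((hc1.sub continuous_const).rpow_const
        (fun q => Or.inl (ne_of_gt (by show (0:ℝ) < U₁ q - c; have := hm₁ q; have := hc.2; linarith)))).intervalIntegrable 0 1
    · intro q
      exact Real.rpow_pos_of_pos (by have := hm₁ q; have := hc.2; linarith) e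
    · norm_num
  have hpos2 : ∀ e : ℝ, 0 < ∫ q in (0:ℝ)..1, (c - U₂ q) ^ e := by
    intro e
    apply intervalIntegral.intervalIntegral_pos_of_pos
    · exact ((continuous_const.sub hc2).rpow_const
        (fun q => Or.inl (ne_of_gt (by show (0:ℝ) < c - U₂ q; have := hM₂ q; have := hc.1; linarith)))).intervalIntegrable 0 1
    · intro q
      exact Real.rpow_pos_of_pos (by have := hM₂ q; have := hc.1; linarith) e
    · norm_num
  rw [hdd1, hdd2, hd1 c hc.2, hd2 c hc.1]
  constructor
  · ring
  · have key : -((1:ℝ)/4) * (∫ q in (0:ℝ)..1, (c - U₂ q) ^ (-(3:ℝ)/2))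
        * (-((1:ℝ)/2) * ∫ q in (0:ℝ)..1, (U₁ q - c) ^ (-(1:ℝ)/2))
        - (-((1:ℝ)/4) * ∫ q in (0:ℝ)..1, (U₁ q - c) ^ (-(3:ℝ)/2))
        * (((1:ℝ)/2) * ∫ q in (0:ℝ)..1, (c - U₂ q) ^ (-(1:ℝ)/2))
        = (1/8) * ((∫ q in (0:ℝ)..1, (c - U₂ q) ^ (-(3:ℝ)/2))
            * (∫ q in (0:ℝ)..1, (U₁ q - c) ^ (-(1:ℝ)/2))
          + (∫ q in (0:ℝ)..1, (U₁ q - c) ^ (-(3:ℝ)/2))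
            * (∫ q in (0:ℝ)..1, (c - U₂ q) ^ (-(1:ℝ)/2))) := by ring
    rw [key]
    have := hpos1 (-(1:ℝ)/2)
    have := hpos1 (-(3:ℝ)/2)
    have := hpos2 (-(1:ℝ)/2)
    have := hpos2 (-(3:ℝ)/2)
    positivity
end

section
/- Let G : [0, π/2] → ℝ be a C¹ function with 0 < m ≤ G(α) ≤ M and |G'(α)| ≤ K for all α ∈ [0, π/2], and let γ = {(G(α)cos α, G(α)sin α) : α ∈ [0, π/2]} ⊂ ℝ². Then there exists δ > 0 (depending only on m, M, K) such that for every ε > 0, the Euclidean distance between the sets γ and (1+ε)γ = {(1+ε)p : p ∈ γ} satisfies dist(γ, (1+ε)γ) ≥ δε. -/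
open Real Set Filter

/-- Euclidean distance between two points of `ℝ × ℝ`. -/
noncomputable def euclDist (p q : ℝ × ℝ) : ℝ :=
  Real.sqrt ((p.1 - q.1) ^ 2 + (p.2 - q.2) ^ 2)

/-- **Uniform separation of a star-shaped curve from its dilates.** If
`G : [0,π/2] → ℝ` is `C¹` with `0 < m ≤ G ≤ M` and `|G'| ≤ K`, and
`γ = {(G(α)cos α, G(α)sin α)}`, then there is `δ > 0`, depending only on `m, M, K`,
such that for every `ε > 0` the Euclidean distance between `γ` and `(1+ε)γ` is
at least `δε`. -/
theorem dist_curve_dilate_ge (m M K : ℝ) (hm : 0 < m) :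
    ∃ δ > (0:ℝ), ∀ G : ℝ → ℝ,
      ContDiffOn ℝ 1 G (Set.Icc 0 (π/2)) →
      (∀ α ∈ Set.Icc (0:ℝ) (π/2), m ≤ G α ∧ G α ≤ M) →
      (∀ α ∈ Set.Icc (0:ℝ) (π/2), |derivWithin G (Set.Icc 0 (π/2)) α| ≤ K) →
      ∀ ε > (0:ℝ), ∀ α ∈ Set.Icc (0:ℝ) (π/2), ∀ β ∈ Set.Icc (0:ℝ) (π/2),
        δ * ε ≤ euclDist (G α * Real.cos α, G α * Real.sin α)
          ((1 + ε) * (G β * Real.cos β), (1 + ε) * (G β * Real.sin β)) := by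
  have hπ : (0:ℝ) < π := Real.pi_pos
  refine ⟨min (m/2) (m^2/(π*(max K 0 + 1))), ?_, ?_⟩
  · have h1 : (0:ℝ) < max K 0 + 1 := by positivity
    have : (0:ℝ) < m^2/(π*(max K 0 + 1)) := by positivity
    exact lt_min (by linarith) this
  intro G hG hGm hGK ε hε α hα β hβ
  set δ := min (m/2) (m^2/(π*(max K 0 + 1))) with hδ
  set r := G α with hr
  set s := (1+ε) * G β with hs
  have hmr : m ≤ r := (hGm α hα).1
  have hmGβ : m ≤ G β := (hGm β hβ).1
  have hms : m ≤ s := by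
    have : G β ≤ (1+ε) * G β := by nlinarith
    linarith
  have hrs0 : (0:ℝ) ≤ 2*r*s := by nlinarith
  -- Lipschitz bound
  have hlip : |G α - G β| ≤ K * |α - β| := by
    have := Convex.norm_image_sub_le_of_norm_derivWithin_le (𝕜 := ℝ)
      (hG.differentiableOn one_ne_zero) (fun x hx => hGK x hx) (convex_Icc _ _) hβ hα
    simpa [Real.norm_eq_abs] using this
  have hK0 : 0 ≤ K := le_trans (abs_nonneg _) (hGK 0 ⟨le_rfl, by positivity⟩)
  clear_value δ r s
  -- distance squared formula
  have hsum : euclDist (G α * Real.cos α, G α * Real.sin α)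
      ((1 + ε) * (G β * Real.cos β), (1 + ε) * (G β * Real.sin β))
      = Real.sqrt (r^2 + s^2 - 2*r*s*Real.cos (α - β)) := by
    unfold euclDist
    congr 1
    have h1 := Real.sin_sq_add_cos_sq α
    have h2 := Real.sin_sq_add_cos_sq β
    rw [Real.cos_sub, hr, hs]
    simp only
    linear_combination (G α)^2 * h1 + ((1+ε)*(G β))^2 * h2
  rw [hr, hsum]
  have hθ : |α - β| ≤ π/2 := by
    rw [abs_sub_le_iff]
    constructor <;> linarith [hα.1, hα.2, hβ.1, hβ.2]
  by_cases hcase : K * |α - β| ≤ ε * m / 2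
  · -- radial separation dominates
    have hrs : ε * m / 2 ≤ |r - s| := by
      have h1 : ε * m ≤ ε * G β := by nlinarith
      have h2 : r - s = (G α - G β) - ε * G β := by rw [hr, hs]; ring
      have h3 : |ε * G β| = ε * G β := abs_of_nonneg (by nlinarith)
      calc ε * m / 2 ≤ ε * G β - K * |α - β| := by linarith
        _ ≤ |ε * G β| - |G α - G β| := by rw [h3]; linarith [hlip]
        _ ≤ |ε * G β - (G α - G β)| := abs_sub_abs_le_abs_sub _ _
        _ = |r - s| := by rw [h2, abs_sub_comm]
    have hsq : (r - s)^2 ≤ r^2 + s^2 - 2*r*s*Real.cos (α - β) := by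
      have hA1 : 2*r*s*Real.cos (α - β) ≤ 2*r*s*1 :=
        mul_le_mul_of_nonneg_left (Real.cos_le_one _) hrs0
      nlinarith [hA1]
    have hD := Real.sqrt_le_sqrt hsq
    rw [Real.sqrt_sq_eq_abs] at hD
    have hδ2 : δ ≤ m/2 := hδ ▸ min_le_left _ _
    calc δ * ε ≤ (m/2) * ε := mul_le_mul_of_nonneg_right hδ2 hε.le
      _ = ε * m / 2 := by ring
      _ ≤ |r - s| := hrs
      _ ≤ _ := hD
  · -- angular separation dominates
    push_neg at hcase
    have hKpos : 0 < K := by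
      rcases hK0.lt_or_eq with h | h
      · exact h
      · exfalso; rw [← h] at hcase; simp at hcase; nlinarith
    have hθpos : ε * m / (2 * K) < |α - β| := by
      rw [div_lt_iff₀ (by positivity)]
      nlinarith
    -- cos bound
    have hcos : Real.cos (α - β) ≤ 1 - 2/π^2 * (α - β)^2 :=
      Real.cos_le_one_sub_mul_cos_sq (le_trans hθ (by linarith))
    have hsq : (2*m/π * |α - β|)^2 ≤ r^2 + s^2 - 2*r*s*Real.cos (α - β) := by
      have hA : 2*r*s*Real.cos (α - β) ≤ 2*r*s*(1 - 2/π^2 * (α - β)^2) :=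
        mul_le_mul_of_nonneg_left hcos hrs0
      have h6 : m^2 * ((α - β)^2 * (π^2)⁻¹) ≤ r*s*((α - β)^2 * (π^2)⁻¹) :=
        mul_le_mul_of_nonneg_right (by nlinarith) (by positivity)
      have h1 : (2*m/π * |α - β|)^2 = 4*(m^2*((α - β)^2*(π^2)⁻¹)) := by
        rw [mul_pow, div_pow, sq_abs]
        field_simp
        ring
      rw [h1]
      have hexp : 2*r*s*(1 - 2/π^2 * (α - β)^2)
          = 2*r*s - 4*(r*s*((α - β)^2*(π^2)⁻¹)) := by
        field_simp
        ring
      rw [hexp] at hA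
      linarith [sq_nonneg (r - s), hA, h6]
    have hD := Real.sqrt_le_sqrt hsq
    rw [Real.sqrt_sq (by positivity)] at hD
    have hδ2 : δ ≤ m^2/(π*(max K 0 + 1)) := hδ ▸ min_le_right _ _
    have hKle : K ≤ max K 0 + 1 := le_trans (le_max_left _ _) (by linarith)
    have h4 : m^2/(π*(max K 0 + 1)) ≤ m^2/(π*K) :=
      div_le_div_of_nonneg_left (sq_nonneg m) (mul_pos hπ hKpos) (mul_le_mul_of_nonneg_left hKle hπ.le)
    have h5 : 2*m/π * (ε * m / (2 * K)) = ε * (m^2/(π*K)) := by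
      field_simp
    calc δ * ε = ε * δ := mul_comm _ _
      _ ≤ ε * (m^2/(π*K)) := mul_le_mul_of_nonneg_left (hδ2.trans h4) hε.le
      _ = 2*m/π * (ε * m / (2 * K)) := h5.symm
      _ ≤ 2*m/π * |α - β| := mul_le_mul_of_nonneg_left hθpos.le (by positivity)
      _ ≤ _ := hD
end

section
/- Let α be an irrational number that is typical with exponent τ > 0 and constant δ > 0, and let P_j/Q_j (j ≥ 0) denote the convergents of the continued fraction expansion of α. Then for all j ≥ 1: δ·2^j < Q_j²·(log(1+Q_j))^τ, and Q_{j+1} < δ^{−1}·Q_j·(log(1+Q_j))^τ. -/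
open Real Set Filter

private lemma two_pow_le_fib_mul_fib (n : ℕ) : 2 ^ n ≤ Nat.fib (n + 1) * Nat.fib (n + 2) := by
  induction n with
  | zero => simp
  | succ n ih =>
    have h1 : Nat.fib (n + 1) ≤ Nat.fib (n + 2) := Nat.fib_le_fib_succ
    have h2 : Nat.fib (n + 3) = Nat.fib (n + 2) + Nat.fib (n + 1) := by
      rw [Nat.fib_add_two]; exact Nat.add_comm _ _
    have h3 : 2 * (Nat.fib (n + 1) * Nat.fib (n + 2)) ≤ Nat.fib (n + 2) * Nat.fib (n + 3) := by
      rw [h2]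
      nlinarith [Nat.fib (n+1), Nat.fib (n+2)]
    calc 2 ^ (n + 1) = 2 * 2 ^ n := by ring
      _ ≤ 2 * (Nat.fib (n + 1) * Nat.fib (n + 2)) := by omega
      _ ≤ Nat.fib (n + 2) * Nat.fib (n + 3) := h3

/-- **Growth of continued fraction denominators of a typical number.** If `α` is an
irrational number typical with exponent `τ > 0` and constant `δ > 0`, and `Q_j`
denotes the `j`-th denominator of the continued fraction expansion of `α`, then for
all `j ≥ 1`: `δ 2^j < Q_j² (log(1+Q_j))^τ` and `Q_{j+1} < δ⁻¹ Q_j (log(1+Q_j))^τ`. -/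
theorem typical_cf_denominator_growth (α τ δ : ℝ) (hτ : 0 < τ) (hδ : 0 < δ)
    (hirr : Irrational α) (ht : IsTypicalWith α τ δ) :
    ∀ j : ℕ, 1 ≤ j →
      δ * 2 ^ j < (GenContFract.of α).dens j ^ 2 *
          (Real.log (1 + (GenContFract.of α).dens j)) ^ τ ∧
      (GenContFract.of α).dens (j + 1) <
        δ⁻¹ * (GenContFract.of α).dens j *
          (Real.log (1 + (GenContFract.of α).dens j)) ^ τ := by
  set g := GenContFract.of α with hg
  -- α is irrational, hence the continued fraction never terminates
  have hnt : ∀ n, ¬g.TerminatedAt n := by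
    intro n hn
    obtain ⟨q, hq⟩ := (GenContFract.terminates_iff_rat α).mp ⟨n, hn⟩
    exact hirr ⟨q, hq.symm⟩
  have hs : ∀ n, ∃ gp, g.s.get? n = some gp := by
    intro n
    exact Option.ne_none_iff_exists'.1 fun h => hnt n (by rwa [GenContFract.terminatedAt_iff_s_none])
  -- the continuants are integers
  have hint : ∀ n, (∃ a : ℤ, (g.contsAux n).a = (a : ℝ)) ∧ ∃ b : ℤ, (g.contsAux n).b = (b : ℝ) := by
    intro n
    induction n using Nat.strong_induction_on with
    | _ n ih =>
      match n with
      | 0 =>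
        refine ⟨⟨1, ?_⟩, ⟨0, ?_⟩⟩ <;> simp [GenContFract.zeroth_contAux_eq_one_zero]
      | 1 =>
        refine ⟨⟨⌊α⌋, ?_⟩, ⟨1, ?_⟩⟩ <;>
          simp [GenContFract.first_contAux_eq_h_one, GenContFract.of_h_eq_floor, hg]
      | (n + 2) =>
        obtain ⟨gp, hsn⟩ := hs n
        have ha1 : gp.a = 1 := GenContFract.of_partNum_eq_one (GenContFract.partNum_eq_s_a hsn)
        obtain ⟨z, hz⟩ := GenContFract.exists_int_eq_of_partDen (GenContFract.partDen_eq_s_b hsn)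
        have hrec := GenContFract.contsAux_recurrence hsn rfl rfl
        obtain ⟨⟨a0, ha0⟩, ⟨b0, hb0⟩⟩ := ih n (by omega)
        obtain ⟨⟨a1, ha1'⟩, ⟨b1, hb1⟩⟩ := ih (n + 1) (by omega)
        refine ⟨⟨z * a1 + a0, ?_⟩, ⟨z * b1 + b0, ?_⟩⟩ <;> rw [hrec] <;>
          push_cast <;> simp [ha1, hz, ha0, hb0, ha1', hb1]
  intro j hj
  -- notation
  set B := g.dens j with hB
  set B' := g.dens (j + 1) with hB'
  set L := Real.log (1 + B) ^ τ with hL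
  -- fibonacci lower bounds
  have hBfib : (Nat.fib (j + 1) : ℝ) ≤ B :=
    GenContFract.succ_nth_fib_le_of_nth_den (Or.inr (hnt _))
  have hB'fib : (Nat.fib (j + 2) : ℝ) ≤ B' :=
    GenContFract.succ_nth_fib_le_of_nth_den (Or.inr (hnt _))
  have hB1 : (1 : ℝ) ≤ B := by
    refine le_trans ?_ hBfib
    have := Nat.fib_pos.2 (Nat.succ_pos j)
    exact_mod_cast this
  have hB'1 : (1 : ℝ) ≤ B' := by
    refine le_trans ?_ hB'fib
    have := Nat.fib_pos.2 (Nat.succ_pos (j + 1))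
    exact_mod_cast this
  have hBpos : (0 : ℝ) < B := by linarith
  have hB'pos : (0 : ℝ) < B' := by linarith
  have hLpos : (0 : ℝ) < L := Real.rpow_pos_of_pos (Real.log_pos (by linarith)) τ
  -- integer numerator and denominators
  obtain ⟨a, hA⟩ : ∃ a : ℤ, g.nums j = (a : ℝ) := by
    obtain ⟨a, ha⟩ := (hint (j + 1)).1
    exact ⟨a, by rw [GenContFract.num_eq_conts_a, GenContFract.nth_cont_eq_succ_nth_contAux, ha]⟩
  obtain ⟨b, hBint⟩ : ∃ b : ℤ, B = (b : ℝ) := by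
    obtain ⟨b, hb⟩ := (hint (j + 1)).2
    exact ⟨b, by rw [hB, GenContFract.den_eq_conts_b, GenContFract.nth_cont_eq_succ_nth_contAux, hb]⟩
  obtain ⟨b', hB'int⟩ : ∃ b' : ℤ, B' = (b' : ℝ) := by
    obtain ⟨b', hb'⟩ := (hint (j + 2)).2
    exact ⟨b', by rw [hB', GenContFract.den_eq_conts_b, GenContFract.nth_cont_eq_succ_nth_contAux, hb']⟩
  -- approximation bound, strict by irrationality
  have habs : |α - g.convs j| ≤ 1 / (B * B') := GenContFract.abs_sub_convs_le (hnt j)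
  have hconv : g.convs j = (a : ℝ) / (b : ℝ) := by
    rw [GenContFract.conv_eq_num_div_den, hA, ← hBint]
  have hbne : (b : ℝ) ≠ 0 := by rw [← hBint]; exact ne_of_gt hBpos
  have hb'ne : (b' : ℝ) ≠ 0 := by rw [← hB'int]; exact ne_of_gt hB'pos
  have hne : |α - g.convs j| ≠ 1 / (B * B') := by
    intro h
    rcases abs_eq (by positivity : (0:ℝ) ≤ 1 / (B * B')) |>.1 h with h' | h'
    · exact hirr ⟨(a : ℚ) / b + 1 / (b * b'), by
        push_cast
        rw [hconv, hBint, hB'int] at h'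
        linarith⟩
    · exact hirr ⟨(a : ℚ) / b - 1 / (b * b'), by
        push_cast
        rw [hconv, hBint, hB'int] at h'
        linarith⟩
  have hlt : |α - g.convs j| < 1 / (B * B') := lt_of_le_of_ne habs hne
  -- |B α - a| < 1 / B'
  have hkey : |(-a : ℝ) + α * b| < 1 / B' := by
    have : (-a : ℝ) + α * b = (α - g.convs j) * b := by
      rw [hconv]
      field_simp
      ring
    rw [this, abs_mul, ← hBint, abs_of_pos hBpos]
    calc |α - g.convs j| * B < 1 / (B * B') * B := by
          exact mul_lt_mul_of_pos_right hlt hBpos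
      _ = 1 / B' := by field_simp
  -- typicality lower bound
  have htyp : δ / (B * L) ≤ |(-a : ℝ) + α * b| := by
    have hbz : b ≠ 0 := by
      intro h; apply hbne; rw [h]; simp
    have := ht (-a) b hbz
    rwa [Int.cast_neg, show |(b:ℝ)| = B by rw [← hBint]; exact abs_of_pos hBpos, ← hL] at this
  -- combine: δ / (B L) < 1 / B'
  have hmain : δ * B' < B * L := by
    have h1 : δ / (B * L) < 1 / B' := lt_of_le_of_lt htyp hkey
    have h2 : 0 < B * L := by positivity
    rw [div_lt_div_iff₀ h2 hB'pos] at h1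
    linarith
  constructor
  · -- δ * 2^j < B^2 * L
    have hfib : (2 : ℝ) ^ j ≤ B * B' := by
      calc (2 : ℝ) ^ j = ((2 ^ j : ℕ) : ℝ) := by push_cast; ring
        _ ≤ ((Nat.fib (j + 1) * Nat.fib (j + 2) : ℕ) : ℝ) := by
            exact_mod_cast two_pow_le_fib_mul_fib j
        _ ≤ B * B' := by
            push_cast
            exact mul_le_mul hBfib hB'fib (by positivity) (by linarith)
    have h3 : δ * (B * B') < B ^ 2 * L := by nlinarith
    calc δ * 2 ^ j ≤ δ * (B * B') := by nlinarith
      _ < B ^ 2 * L := h3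
  · -- B' < δ⁻¹ * B * L
    rw [show δ⁻¹ * B * L = B * L / δ by field_simp, lt_div_iff₀ hδ]
    linarith
end
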